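/- arXiv:2605.00469 — 3 statements merged into one kernel-verified Lean document; each statement's English description precedes it below -/
import Mathlib

section
/- Let A=(a_ij) be an n×n symmetrizable GCM with symmetrizer d_1,…,d_n. Let β_1,…,β_m be real roots of A, say β_i=w_i·α_{p_i} with coroots β_i∨=w_i·α_{p_i}∨, which are linearly independent in Q⊗ℚ (for instance the members of a linearly independent π-system in A), and let B=(⟨β_i∨,β_j⟩)_{i,j=1}^m. Then: (1) m≤n; (2) if m=n, then det B = k·det A for some integer k≥1; (3) if m=n, then the symmetrized matrices diag((β_i,β_i)/2)·B and diag(d_i)·A are congruent over ℝ, i.e., there is an invertible real matrix V with diag((β_i,β_i)/2)·B = V·(diag(d_i)·A)·Vᵀ; in particular they have the same signature. -/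
/-- An integer matrix is a generalized Cartan matrix. -/
def IsGCM {n : ℕ} (A : Matrix (Fin n) (Fin n) ℤ) : Prop :=
  (∀ i, A i i = 2) ∧ (∀ i j, i ≠ j → A i j ≤ 0) ∧ (∀ i j, A i j = 0 → A j i = 0)

/-- `d` is a symmetrizer of `A`: positive rationals with `dᵢ aᵢⱼ = dⱼ aⱼᵢ`. -/
def IsSymmetrizer {n : ℕ} (A : Matrix (Fin n) (Fin n) ℤ) (d : Fin n → ℚ) : Prop :=
  (∀ i, 0 < d i) ∧ ∀ i j, d i * A i j = d j * A j i

/-- The pairing `⟨γ∨, β⟩` between the coroot lattice and the root lattice: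
in coordinates (γ in the coroot basis, β in the root basis) it is `∑ γᵢ aᵢⱼ βⱼ`,
so that `⟨αᵢ∨, αⱼ⟩ = aᵢⱼ`. -/
def pairing {n : ℕ} (A : Matrix (Fin n) (Fin n) ℤ) (y x : Fin n → ℤ) : ℤ :=
  ∑ i, ∑ j, y i * A i j * x j

/-- Simple reflection `s_k` acting on the root lattice: `s_k x = x − ⟨α_k∨, x⟩ α_k`. -/
def sRoot {n : ℕ} (A : Matrix (Fin n) (Fin n) ℤ) (k : Fin n) (x : Fin n → ℤ) : Fin n → ℤ :=
  fun i => x i - (if i = k then ∑ j, A k j * x j else 0)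

/-- Simple reflection `s_k` acting on the coroot lattice: `s_k(αⱼ∨) = αⱼ∨ − aⱼₖ α_k∨`. -/
def sCoroot {n : ℕ} (A : Matrix (Fin n) (Fin n) ℤ) (k : Fin n) (y : Fin n → ℤ) : Fin n → ℤ :=
  fun i => y i - (if i = k then ∑ j, y j * A j k else 0)

/-- Action on the root lattice of a Weyl group element given as a word in simple reflections. -/
def actRoot {n : ℕ} (A : Matrix (Fin n) (Fin n) ℤ) (w : List (Fin n)) (x : Fin n → ℤ) :
    Fin n → ℤ :=
  w.foldr (sRoot A) x

/-- Action on the coroot lattice of a Weyl group element given as a word in simple reflections. -/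
def actCoroot {n : ℕ} (A : Matrix (Fin n) (Fin n) ℤ) (w : List (Fin n)) (y : Fin n → ℤ) :
    Fin n → ℤ :=
  w.foldr (sCoroot A) y

/-- The invariant symmetric bilinear form on `Q ⊗ ℚ` determined by a symmetrizer `d`:
`(αᵢ, αⱼ) = dᵢ aᵢⱼ`. -/
def formQ {n : ℕ} (A : Matrix (Fin n) (Fin n) ℤ) (d : Fin n → ℚ) (x y : Fin n → ℤ) : ℚ :=
  ∑ i, ∑ j, d i * (A i j : ℚ) * (x i : ℚ) * (y j : ℚ)

/-!
For a real root `β = w αₚ` the coroot is a rescaled copy of the root: `dᵢ βᵢ = dₚ β∨ᵢ` in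
coordinates, because `y ↦ (yᵢ / dᵢ)ᵢ` intertwines the actions of `s_k` on `Q∨` and on `Q`
(this is where `dₖ aₖⱼ = dⱼ aⱼₖ` enters). With `R`, `R∨` the matrices whose rows are the `βᵢ`,
`βᵢ∨`, this reads `R D = Dₚ R∨` for `D = diag(dᵢ)`, `Dₚ = diag(d_{pᵢ})`, while `B = R∨ A Rᵀ`.
Hence `Dₚ B = R (D A) Rᵀ`, and `(βᵢ, βᵢ) = 2 d_{pᵢ}` because `⟨βᵢ∨, βᵢ⟩ = 2`: this is the
congruence, with `V = R`. Taking determinants, `det B = (det R∨ det R) det A` and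
`det R∨ det R = (det R)² ∏ dᵢ / ∏ d_{pᵢ} > 0`, since `det R ≠ 0` by linear independence.
-/

open Matrix

section RealRoots

variable {n : ℕ} {A : Matrix (Fin n) (Fin n) ℤ} {d : Fin n → ℚ}

theorem sRoot_eq (k : Fin n) (x : Fin n → ℤ) :
    sRoot A k x = x - (A *ᵥ x) k • Pi.single k 1 := by
  ext i
  by_cases hik : i = k <;> simp [sRoot, hik, mulVec, dotProduct]

theorem sCoroot_eq (k : Fin n) (y : Fin n → ℤ) :
    sCoroot A k y = y - (y ᵥ* A) k • Pi.single k 1 := by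
  ext i
  by_cases hik : i = k <;> simp [sCoroot, hik, vecMul, dotProduct]

theorem pairing_eq_dotProduct (y x : Fin n → ℤ) : pairing A y x = y ⬝ᵥ (A *ᵥ x) := by
  simp only [pairing, dotProduct, mulVec, Finset.mul_sum, mul_assoc]

theorem pairing_sCoroot_sRoot {k : Fin n} (hk : A k k = 2) (y x : Fin n → ℤ) :
    pairing A (sCoroot A k y) (sRoot A k x) = pairing A y x := by
  simp only [pairing_eq_dotProduct, sRoot_eq, sCoroot_eq, mulVec_sub, mulVec_smul, sub_dotProduct,
    dotProduct_sub, smul_dotProduct, dotProduct_smul, mulVec_single_one, single_one_dotProduct,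
    smul_eq_mul]
  rw [show y ⬝ᵥ A.col k = (y ᵥ* A) k from rfl, col_apply, hk]
  ring

theorem IsSymmetrizer.mul_sRoot_eq_mul_sCoroot (hd : IsSymmetrizer A d) {c : ℚ}
    {x y : Fin n → ℤ} (hxy : ∀ i, d i * x i = c * y i) (k i : Fin n) :
    d i * sRoot A k x i = c * sCoroot A k y i := by
  have hk : d k * ∑ j, (A k j : ℚ) * x j = c * ∑ j, (y j : ℚ) * A j k := by
    simp only [Finset.mul_sum]
    refine Finset.sum_congr rfl fun j _ => ?_
    rw [← mul_assoc, hd.2 k j]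
    linear_combination (A j k : ℚ) * hxy j
  by_cases hik : i = k
  · subst hik
    simp only [sRoot, sCoroot, if_true]
    push_cast
    linear_combination hxy i - hk
  · simp [sRoot, sCoroot, hik, hxy i]

theorem IsSymmetrizer.mul_actRoot_single_apply (hd : IsSymmetrizer A d) (w : List (Fin n))
    (p i : Fin n) :
    d i * actRoot A w (Pi.single p 1) i = d p * actCoroot A w (Pi.single p 1) i := by
  induction w generalizing i with
  | nil => by_cases hip : i = p <;> simp [actRoot, actCoroot, hip]
  | cons k w ih => exact hd.mul_sRoot_eq_mul_sCoroot ih k i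

theorem pairing_actCoroot_actRoot (hA : ∀ k, A k k = 2) (w : List (Fin n)) (y x : Fin n → ℤ) :
    pairing A (actCoroot A w y) (actRoot A w x) = pairing A y x := by
  induction w with
  | nil => rfl
  | cons k w ih => exact (pairing_sCoroot_sRoot (hA k) _ _).trans ih

theorem pairing_actCoroot_single_actRoot_single (hA : ∀ k, A k k = 2) (w : List (Fin n))
    (p : Fin n) :
    pairing A (actCoroot A w (Pi.single p 1)) (actRoot A w (Pi.single p 1)) = 2 := by
  rw [pairing_actCoroot_actRoot hA, pairing_eq_dotProduct, mulVec_single_one,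
    single_one_dotProduct, col_apply, hA]

theorem IsSymmetrizer.formQ_actRoot_single (hd : IsSymmetrizer A d) (w : List (Fin n))
    (p : Fin n) (x : Fin n → ℤ) :
    formQ A d (actRoot A w (Pi.single p 1)) x
      = d p * pairing A (actCoroot A w (Pi.single p 1)) x := by
  simp only [formQ, pairing, Int.cast_sum, Int.cast_mul, Finset.mul_sum]
  refine Finset.sum_congr rfl fun i _ => Finset.sum_congr rfl fun j _ => ?_
  linear_combination (A i j * x j : ℚ) * hd.mul_actRoot_single_apply w p i

theorem IsSymmetrizer.formQ_actRoot_single_self (hd : IsSymmetrizer A d) (hA : ∀ k, A k k = 2)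
    (w : List (Fin n)) (p : Fin n) :
    formQ A d (actRoot A w (Pi.single p 1)) (actRoot A w (Pi.single p 1)) = 2 * d p := by
  rw [hd.formQ_actRoot_single, pairing_actCoroot_single_actRoot_single hA]
  push_cast
  ring

end RealRoots

section RootMatrices

variable {m n : ℕ} {A : Matrix (Fin n) (Fin n) ℤ} {d : Fin n → ℚ}

def rootMatrix (A : Matrix (Fin n) (Fin n) ℤ) (w : Fin m → List (Fin n)) (p : Fin m → Fin n) :
    Matrix (Fin m) (Fin n) ℤ :=
  of fun i => actRoot A (w i) (Pi.single (p i) 1)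

def corootMatrix (A : Matrix (Fin n) (Fin n) ℤ) (w : Fin m → List (Fin n)) (p : Fin m → Fin n) :
    Matrix (Fin m) (Fin n) ℤ :=
  of fun i => actCoroot A (w i) (Pi.single (p i) 1)

theorem of_pairing_eq_mul_mul_transpose (Y X : Fin m → Fin n → ℤ) :
    of (fun i j => pairing A (Y i) (X j)) = of Y * A * (of X)ᵀ := by
  ext i j
  simp only [of_apply, pairing_eq_dotProduct, mul_apply, transpose_apply, dotProduct, mulVec,
    Finset.mul_sum, Finset.sum_mul, mul_assoc]
  exact Finset.sum_comm

theorem IsSymmetrizer.rootMatrix_mul_diagonal {K : Type*} [Field K] [CharZero K]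
    (hd : IsSymmetrizer A d) (w : Fin m → List (Fin n)) (p : Fin m → Fin n) :
    (rootMatrix A w p).map (Int.cast : ℤ → K) * diagonal (fun k => (d k : K))
      = diagonal (fun i => (d (p i) : K)) * (corootMatrix A w p).map (Int.cast : ℤ → K) := by
  ext i k
  rw [mul_diagonal, diagonal_mul, map_apply, map_apply, mul_comm]
  exact_mod_cast congrArg (Rat.cast : ℚ → K) (hd.mul_actRoot_single_apply (w i) (p i) k)

theorem IsSymmetrizer.diagonal_mul_map_corootMatrix_mul_mul_transpose {K : Type*} [Field K]
    [CharZero K] (hd : IsSymmetrizer A d) (w : Fin m → List (Fin n)) (p : Fin m → Fin n) :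
    diagonal (fun i => (d (p i) : K)) *
        (corootMatrix A w p * A * (rootMatrix A w p)ᵀ).map (Int.cast : ℤ → K)
      = (rootMatrix A w p).map (Int.cast : ℤ → K) *
          (diagonal (fun k => (d k : K)) * A.map (Int.cast : ℤ → K)) *
          ((rootMatrix A w p).map (Int.cast : ℤ → K))ᵀ := by
  have h := hd.rootMatrix_mul_diagonal (K := K) w p
  rw [show (Int.cast : ℤ → K) = Int.castRingHom K from rfl] at h ⊢
  simp only [Matrix.map_mul, Matrix.mul_assoc] at h ⊢
  rw [← Matrix.mul_assoc (diagonal _), ← h, Matrix.mul_assoc, transpose_map]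

theorem det_ne_zero_of_linearIndependent_intCast {X : Fin n → Fin n → ℤ}
    (hX : LinearIndependent ℚ (fun i k => (X i k : ℚ))) : (of X).det ≠ 0 := by
  have hunit := linearIndependent_rows_iff_isUnit (A := (of X).map (Int.cast : ℤ → ℚ)) |>.mp hX
  rw [isUnit_iff_isUnit_det, ← Int.cast_det, isUnit_iff_ne_zero] at hunit
  exact_mod_cast hunit

theorem IsSymmetrizer.det_corootMatrix_mul_det_rootMatrix_pos (hd : IsSymmetrizer A d)
    (w : Fin n → List (Fin n)) (p : Fin n → Fin n) (hR : (rootMatrix A w p).det ≠ 0) :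
    0 < (corootMatrix A w p).det * (rootMatrix A w p).det := by
  have hdet := congrArg det (hd.rootMatrix_mul_diagonal (K := ℚ) w p)
  rw [det_mul, det_mul, det_diagonal, det_diagonal, ← Int.cast_det, ← Int.cast_det] at hdet
  have hpos : (0 : ℚ) < (corootMatrix A w p).det * (rootMatrix A w p).det * ∏ i, d (p i) := by
    calc (0 : ℚ) < (rootMatrix A w p).det ^ 2 * ∏ k, d k :=
          mul_pos (sq_pos_of_ne_zero (Int.cast_ne_zero.mpr hR))
            (Finset.prod_pos fun k _ => hd.1 k)
      _ = _ := by linear_combination (rootMatrix A w p).det * hdet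
  exact_mod_cast (mul_pos_iff_of_pos_right (Finset.prod_pos fun i _ => hd.1 (p i))).mp hpos

end RootMatrices

/-- For linearly independent real roots `β₁,…,β_m` of a symmetrizable GCM `A`
with `B = (⟨βᵢ∨, βⱼ⟩)`: (1) `m ≤ n`; (2) if `m = n` then `det B = k · det A` for some
integer `k ≥ 1`; (3) if `m = n` then `diag((βᵢ,βᵢ)/2)·B` and `diag(dᵢ)·A` are congruent
over ℝ (hence have the same signature). -/
theorem pisystem_det_signature {n m : ℕ} (A : Matrix (Fin n) (Fin n) ℤ) (hA : IsGCM A)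
    (d : Fin n → ℚ) (hd : IsSymmetrizer A d)
    (w : Fin m → List (Fin n)) (p : Fin m → Fin n)
    (β βv : Fin m → Fin n → ℤ)
    (hβ : ∀ i, β i = actRoot A (w i) (Pi.single (p i) 1))
    (hβv : ∀ i, βv i = actCoroot A (w i) (Pi.single (p i) 1))
    (hli : LinearIndependent ℚ (fun i => fun k => ((β i k : ℚ))))
    (B : Matrix (Fin m) (Fin m) ℤ)
    (hB : ∀ i j, B i j = pairing A (βv i) (β j)) :
    m ≤ n
    ∧ (m = n → ∃ k : ℤ, 1 ≤ k ∧ B.det = k * A.det)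
    ∧ (∀ h : m = n, ∃ V : Matrix (Fin m) (Fin m) ℝ, IsUnit V.det ∧
        Matrix.diagonal (fun i => ((formQ A d (β i) (β i) : ℝ)) / 2) *
            B.map (fun t => (t : ℝ))
          = V * (Matrix.diagonal (fun i => ((d (Fin.cast h i) : ℝ))) *
              (A.submatrix (Fin.cast h) (Fin.cast h)).map (fun t => (t : ℝ))) * V.transpose) := by
  obtain rfl : β = fun i => actRoot A (w i) (Pi.single (p i) 1) := funext hβ
  obtain rfl : βv = fun i => actCoroot A (w i) (Pi.single (p i) 1) := funext hβv
  obtain rfl : B = corootMatrix A w p * A * (rootMatrix A w p)ᵀ := by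
    ext i j
    rw [hB, rootMatrix, corootMatrix, ← of_pairing_eq_mul_mul_transpose, of_apply]
  refine ⟨by simpa using hli.fintype_card_le_finrank, ?_, ?_⟩
  · rintro rfl
    refine ⟨_, hd.det_corootMatrix_mul_det_rootMatrix_pos w p
      (det_ne_zero_of_linearIndependent_intCast hli), ?_⟩
    rw [det_mul, det_mul, det_transpose]
    ring
  · rintro rfl
    have hnorm : (fun i => (formQ A d (actRoot A (w i) (Pi.single (p i) 1))
        (actRoot A (w i) (Pi.single (p i) 1)) : ℝ) / 2) = fun i => (d (p i) : ℝ) := by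
      funext i
      rw [hd.formQ_actRoot_single_self hA.1]
      push_cast
      ring
    refine ⟨(rootMatrix A w p).map (Int.cast : ℤ → ℝ), ?_, ?_⟩
    · rw [← Int.cast_det, isUnit_iff_ne_zero, Int.cast_ne_zero]
      exact det_ne_zero_of_linearIndependent_intCast hli
    · simpa only [hnorm, Fin.cast_refl, id_eq, submatrix_id_id]
        using hd.diagonal_mul_map_corootMatrix_mul_mul_transpose w p
end

section
/- Let A=(a_ij) be a doubly-laced symmetrizable GCM such that X_sh={p,q} with p≠q and a_pq=a_qp=−1 (so X_sh is of type A_2). Then there do not exist three real roots β_1,β_2,β_3∈W·{α_p,α_q} (the shortest real roots) whose pairing matrix (⟨β_i∨,β_j⟩)_{i,j=1}^3 is congruent modulo 2 to the Cartan matrix of type A_2×A_1, i.e., with ⟨β_1∨,β_2⟩ and ⟨β_2∨,β_1⟩ odd and ⟨β_1∨,β_3⟩, ⟨β_3∨,β_1⟩, ⟨β_2∨,β_3⟩, ⟨β_3∨,β_2⟩ all even. In particular there is no π-system of type A_2×A_1 in A contained wholly in the shortest real roots. The same conclusions hold with X_long of type A_2 and the longest real roots W·{α_p,α_q} for X_long={p,q}.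 -/
/-!
Reduce modulo 2. If `p, q` are the short nodes, every `a_pj` and `a_qj` with `j ∉ {p, q}` is even
(it is `0` or `-2`), so modulo 2 the rows `p, q` of `A` are those of the Cartan matrix of type `A₂`
and vanish outside `{p, q}`. Hence the simple reflections preserve the congruence
"coroot ≡ root restricted to `{p, q}` (mod 2)" along `W·{α_p, α_q}`, and the vector
`u(β) = (β_p, β_q) mod 2` stays nonzero. Therefore `⟨β∨, γ⟩ ≡ ω(u(β), u(γ))` for the alternating
form `ω(u, v) = u₁v₂ + u₂v₁` on `𝔽₂²`. Nonzero vectors of `𝔽₂²` are `ω`-orthogonal only when they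
are equal, so the two even pairings force `u(β₁) = u(β₃) = u(β₂)`, contradicting `ω(u(β₁), u(β₂)) = 1`.
The long case is the short case for `Aᵀ`, which exchanges roots and coroots.
-/

open Matrix

lemma lt_of_forall_le_iff {ι α : Type*} [LinearOrder α] {f : ι → α} {P : ι → Prop}
    (h : ∀ i, (∀ k, f i ≤ f k) ↔ P i) {i j : ι} (hi : P i) (hj : ¬ P j) : f i < f j :=
  lt_of_le_of_ne ((h i).2 hi j) fun e => hj ((h j).1 fun k => e ▸ (h i).2 hi k)

lemma even_of_symmetrizer_lt {n : ℕ} {A : Matrix (Fin n) (Fin n) ℤ} (hA : IsGCM A)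
    {d : Fin n → ℚ} (hd : IsSymmetrizer A d)
    (hlaced : ∀ i j, i ≠ j → A i j * A j i = 0 ∨ A i j * A j i = 1 ∨ A i j * A j i = 2)
    {i j : Fin n} (hij : d i < d j) : Even (A i j) := by
  have hne : i ≠ j := fun h => hij.ne (congrArg d h)
  rcases eq_or_ne (A i j) 0 with h0 | h0
  · exact h0 ▸ Even.zero
  have hAij : A i j ≤ -1 := by have := hA.2.1 i j hne; omega
  have hAji : A j i ≤ -1 := by
    have := hA.2.1 j i hne.symm
    have := mt (hA.2.2 j i) h0
    omega
  -- `dᵢ aᵢⱼ = dⱼ aⱼᵢ` with `dᵢ < dⱼ` gives `aᵢⱼ < aⱼᵢ < 0`; with `aᵢⱼ aⱼᵢ ≤ 2` this pins `aᵢⱼ = -2`.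
  have hlt : A i j < A j i := by
    by_contra! hle
    have hsym : (d i * A i j : ℚ) = d j * A j i := hd.2 i j
    have : ((A j i : ℤ) : ℚ) ≤ A i j := by exact_mod_cast hle
    have : ((A i j : ℤ) : ℚ) ≤ -1 := by exact_mod_cast hAij
    nlinarith [hd.1 i]
  have hprod : A i j * A j i ≤ 2 := by rcases hlaced i j hne with h | h | h <;> omega
  have : A i j = -2 := by nlinarith
  exact this ▸ even_neg_two

section Reflections

variable {ι R : Type*} [Fintype ι] [CommRing R]

lemma indicator_vecMul {M : Matrix ι ι R} {S : Set ι}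
    (hsupp : ∀ i ∈ S, ∀ j ∉ S, M i j = 0) (hsymm : ∀ i ∈ S, ∀ j ∈ S, M i j = M j i)
    (x : ι → R) : S.indicator x ᵥ* M = S.indicator (M *ᵥ x) := by
  classical
  ext k
  simp only [vecMul, mulVec, dotProduct, Set.indicator_apply]
  split_ifs with hk
  · refine Finset.sum_congr rfl fun j _ => ?_
    split_ifs with hj
    · rw [hsymm j hj k hk, mul_comm]
    · rw [hsupp k hk j hj, zero_mul, zero_mul]
  · refine Finset.sum_eq_zero fun j _ => ?_
    split_ifs with hj
    · rw [hsupp j hj k hk, mul_zero]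
    · rw [zero_mul]

variable [DecidableEq ι]

def reflRoot (M : Matrix ι ι R) (k : ι) (x : ι → R) : ι → R :=
  x - (M *ᵥ x) k • Pi.single k 1

def reflCoroot (M : Matrix ι ι R) (k : ι) (y : ι → R) : ι → R :=
  y - (y ᵥ* M) k • Pi.single k 1

lemma reflCoroot_indicator {M : Matrix ι ι R} {S : Set ι}
    (hsupp : ∀ i ∈ S, ∀ j ∉ S, M i j = 0) (hsymm : ∀ i ∈ S, ∀ j ∈ S, M i j = M j i)
    (k : ι) (x : ι → R) :
    reflCoroot M k (S.indicator x) = S.indicator (reflRoot M k x) := by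
  classical
  ext j
  rw [reflCoroot, indicator_vecMul hsupp hsymm]
  simp only [reflRoot, Pi.sub_apply, Pi.smul_apply, Set.indicator_apply, Pi.single_apply]
  split_ifs <;> simp_all

lemma foldr_reflCoroot_indicator {M : Matrix ι ι R} {S : Set ι}
    (hsupp : ∀ i ∈ S, ∀ j ∉ S, M i j = 0) (hsymm : ∀ i ∈ S, ∀ j ∈ S, M i j = M j i)
    (w : List ι) (x : ι → R) :
    w.foldr (reflCoroot M) (S.indicator x) = S.indicator (w.foldr (reflRoot M) x) :=
  List.foldr_hom _ (reflCoroot_indicator hsupp hsymm)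

end Reflections

section A2

variable {ι R : Type*} [Fintype ι] [DecidableEq ι] [CommRing R] {M : Matrix ι ι R} {p q : ι}

lemma mulVec_apply_of_row_eq_single (h : M p = Pi.single q 1) (x : ι → R) :
    (M *ᵥ x) p = x q := by
  rw [mulVec, h, single_dotProduct, one_mul]

lemma reflRoot_pair_ne_zero (hpq : p ≠ q) (hMp : M p = Pi.single q 1)
    (hMq : M q = Pi.single p 1) (k : ι) {x : ι → R} (hx : (x p, x q) ≠ 0) :
    (reflRoot M k x p, reflRoot M k x q) ≠ 0 := by
  have ep := mulVec_apply_of_row_eq_single hMp x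
  have eq := mulVec_apply_of_row_eq_single hMq x
  contrapose! hx
  simp only [reflRoot, Pi.sub_apply, Pi.smul_apply, Pi.single_apply, smul_eq_mul,
    Prod.mk_eq_zero] at hx ⊢
  obtain ⟨h1, h2⟩ := hx
  rcases eq_or_ne k p with rfl | hkp
  · simp only [if_pos, if_neg hpq.symm, ep, mul_one, mul_zero, sub_zero] at h1 h2
    exact ⟨by simpa [h2] using h1, h2⟩
  rcases eq_or_ne k q with rfl | hkq
  · simp only [if_pos, if_neg hpq, eq, mul_one, mul_zero, sub_zero] at h1 h2
    exact ⟨h1, by simpa [h1] using h2⟩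
  simp only [if_neg hkp.symm, if_neg hkq.symm, mul_zero, sub_zero] at h1 h2
  exact ⟨h1, h2⟩

lemma foldr_reflRoot_pair_ne_zero (hpq : p ≠ q) (hMp : M p = Pi.single q 1)
    (hMq : M q = Pi.single p 1) (w : List ι) {x : ι → R} (hx : (x p, x q) ≠ 0) :
    (w.foldr (reflRoot M) x p, w.foldr (reflRoot M) x q) ≠ 0 := by
  induction w with
  | nil => exact hx
  | cons k w ih => exact reflRoot_pair_ne_zero hpq hMp hMq k ih

lemma indicator_pair_dotProduct_mulVec (hpq : p ≠ q) (hMp : M p = Pi.single q 1)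
    (hMq : M q = Pi.single p 1) (u v : ι → R) :
    ({p, q} : Set ι).indicator u ⬝ᵥ (M *ᵥ v) = u p * v q + u q * v p := by
  have hu : ({p, q} : Set ι).indicator u = Pi.single p (u p) + Pi.single q (u q) := by
    ext j
    by_cases hjp : j = p
    · subst hjp; simp [hpq]
    · by_cases hjq : j = q
      · subst hjq; simp [hjp]
      · simp [hjp, hjq]
  rw [hu, add_dotProduct, single_dotProduct, single_dotProduct,
    mulVec_apply_of_row_eq_single hMp, mulVec_apply_of_row_eq_single hMq]

lemma foldr_reflCoroot_pair_indicator (hpq : p ≠ q) (hMp : M p = Pi.single q 1)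
    (hMq : M q = Pi.single p 1) (w : List ι) (x : ι → R) :
    w.foldr (reflCoroot M) (({p, q} : Set ι).indicator x) =
      ({p, q} : Set ι).indicator (w.foldr (reflRoot M) x) := by
  refine foldr_reflCoroot_indicator ?_ ?_ w x
  · rintro i (rfl | rfl) j hj <;> simp_all
  · rintro i (rfl | rfl) j (rfl | rfl) <;> simp_all [hpq.symm]

end A2

section IntCast

variable {n : ℕ} {R : Type*} [CommRing R] (A : Matrix (Fin n) (Fin n) ℤ)

lemma intCast_comp_sRoot (k : Fin n) (x : Fin n → ℤ) :
    (Int.cast ∘ sRoot A k x : Fin n → R) = reflRoot (A.map Int.cast) k (Int.cast ∘ x) := by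
  ext i
  by_cases hik : i = k <;>
    simp [sRoot, reflRoot, mulVec, dotProduct, hik]

lemma intCast_comp_sCoroot (k : Fin n) (y : Fin n → ℤ) :
    (Int.cast ∘ sCoroot A k y : Fin n → R) = reflCoroot (A.map Int.cast) k (Int.cast ∘ y) := by
  ext i
  by_cases hik : i = k <;>
    simp [sCoroot, reflCoroot, vecMul, dotProduct, hik]

lemma intCast_comp_actRoot (w : List (Fin n)) (x : Fin n → ℤ) :
    (Int.cast ∘ actRoot A w x : Fin n → R) = w.foldr (reflRoot (A.map Int.cast)) (Int.cast ∘ x) :=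
  (List.foldr_hom _ fun k x => (intCast_comp_sRoot A k x).symm).symm

lemma intCast_comp_actCoroot (w : List (Fin n)) (y : Fin n → ℤ) :
    (Int.cast ∘ actCoroot A w y : Fin n → R) =
      w.foldr (reflCoroot (A.map Int.cast)) (Int.cast ∘ y) :=
  (List.foldr_hom _ fun k y => (intCast_comp_sCoroot A k y).symm).symm

lemma intCast_pairing (y x : Fin n → ℤ) :
    ((pairing A y x : ℤ) : R) = (Int.cast ∘ y) ⬝ᵥ (A.map Int.cast *ᵥ (Int.cast ∘ x)) := by
  simp [pairing, dotProduct, mulVec, Finset.mul_sum, mul_assoc]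

end IntCast

lemma ZMod.eq_of_ne_zero_of_cross_eq_zero : ∀ u v : ZMod 2 × ZMod 2, u ≠ 0 → v ≠ 0 →
    u.1 * v.2 + u.2 * v.1 = 0 → u = v := by
  decide

lemma ZMod.cross_self_ne_one : ∀ u : ZMod 2 × ZMod 2, u.1 * u.2 + u.2 * u.1 ≠ 1 := by
  decide

section ModTwo

variable {n : ℕ} {R : Type*} [CommRing R] {A : Matrix (Fin n) (Fin n) ℤ} {p q : Fin n}

lemma intCast_comp_actCoroot_single (hpq : p ≠ q)
    (hMp : A.map (Int.cast : ℤ → R) p = Pi.single q 1)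
    (hMq : A.map (Int.cast : ℤ → R) q = Pi.single p 1) (w : List (Fin n)) {r : Fin n}
    (hr : r = p ∨ r = q) :
    (Int.cast ∘ actCoroot A w (Pi.single r 1) : Fin n → R) =
      ({p, q} : Set (Fin n)).indicator (Int.cast ∘ actRoot A w (Pi.single r 1)) := by
  have hsupp : Function.support (Int.cast ∘ Pi.single r (1 : ℤ) : Fin n → R) ⊆ {p, q} :=
    Function.support_subset_iff'.2 fun j hj => by
      rcases hr with rfl | rfl <;> simp_all
  rw [intCast_comp_actCoroot, intCast_comp_actRoot, ← foldr_reflCoroot_pair_indicator hpq hMp hMq,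
    Set.indicator_eq_self.2 hsupp]

lemma intCast_pairing_actCoroot_single (hpq : p ≠ q)
    (hMp : A.map (Int.cast : ℤ → R) p = Pi.single q 1)
    (hMq : A.map (Int.cast : ℤ → R) q = Pi.single p 1) (w : List (Fin n)) {r : Fin n}
    (hr : r = p ∨ r = q) (x : Fin n → ℤ) :
    ((pairing A (actCoroot A w (Pi.single r 1)) x : ℤ) : R) =
      actRoot A w (Pi.single r 1) p * x q + actRoot A w (Pi.single r 1) q * x p := by
  rw [intCast_pairing, intCast_comp_actCoroot_single hpq hMp hMq w hr,
    indicator_pair_dotProduct_mulVec hpq hMp hMq]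
  rfl

lemma intCast_actRoot_single_ne_zero [Nontrivial R] (hpq : p ≠ q)
    (hMp : A.map (Int.cast : ℤ → R) p = Pi.single q 1)
    (hMq : A.map (Int.cast : ℤ → R) q = Pi.single p 1) (w : List (Fin n)) {r : Fin n}
    (hr : r = p ∨ r = q) :
    (((actRoot A w (Pi.single r 1) p : ℤ) : R), ((actRoot A w (Pi.single r 1) q : ℤ) : R)) ≠ 0 := by
  have h := foldr_reflRoot_pair_ne_zero hpq hMp hMq w (x := Int.cast ∘ Pi.single r (1 : ℤ))
    (by rcases hr with rfl | rfl <;> simp [hpq, hpq.symm])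
  rwa [← intCast_comp_actRoot] at h

lemma intCast_row_eq_single (hpq : p ≠ q) (hpp : A p p = 2) (hApq : A p q = -1)
    (hev : ∀ j, j ≠ p → j ≠ q → Even (A p j)) :
    A.map (Int.cast : ℤ → ZMod 2) p = Pi.single q 1 := by
  ext j
  rw [map_apply]
  rcases eq_or_ne j p with rfl | hjp
  · rw [hpp, Pi.single_eq_of_ne hpq]; rfl
  rcases eq_or_ne j q with rfl | hjq
  · rw [hApq, Pi.single_eq_same]; rfl
  · rw [Pi.single_eq_of_ne hjq, ZMod.intCast_eq_zero_iff_even]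
    exact hev j hjp hjq

theorem false_of_A2xA1_parity (hpq : p ≠ q) (hpp : A p p = 2) (hqq : A q q = 2)
    (hApq : A p q = -1) (hAqp : A q p = -1)
    (hev : ∀ i, (i = p ∨ i = q) → ∀ j, ¬(j = p ∨ j = q) → Even (A i j))
    {w₁ w₂ w₃ : List (Fin n)} {r₁ r₂ r₃ : Fin n}
    (hr₁ : r₁ = p ∨ r₁ = q) (hr₂ : r₂ = p ∨ r₂ = q) (hr₃ : r₃ = p ∨ r₃ = q)
    (h₁₂ : Odd (pairing A (actCoroot A w₁ (Pi.single r₁ 1)) (actRoot A w₂ (Pi.single r₂ 1))))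
    (h₁₃ : Even (pairing A (actCoroot A w₁ (Pi.single r₁ 1)) (actRoot A w₃ (Pi.single r₃ 1))))
    (h₂₃ : Even (pairing A (actCoroot A w₂ (Pi.single r₂ 1)) (actRoot A w₃ (Pi.single r₃ 1)))) :
    False := by
  have hMp := intCast_row_eq_single hpq hpp hApq fun j hjp hjq => hev p (.inl rfl) j (by tauto)
  have hMq := intCast_row_eq_single hpq.symm hqq hAqp fun j hjq hjp =>
    hev q (.inr rfl) j (by tauto)
  let u (w : List (Fin n)) (r : Fin n) : ZMod 2 × ZMod 2 :=
    (actRoot A w (Pi.single r 1) p, actRoot A w (Pi.single r 1) q)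
  have hu : ∀ {w r}, (r = p ∨ r = q) → u w r ≠ 0 :=
    fun hr => intCast_actRoot_single_ne_zero hpq hMp hMq _ hr
  have hform : ∀ {w r}, (r = p ∨ r = q) → ∀ w' r',
      ((pairing A (actCoroot A w (Pi.single r 1)) (actRoot A w' (Pi.single r' 1)) : ℤ) : ZMod 2) =
        (u w r).1 * (u w' r').2 + (u w r).2 * (u w' r').1 :=
    fun hr _ _ => intCast_pairing_actCoroot_single hpq hMp hMq _ hr _
  rw [← ZMod.intCast_eq_one_iff_odd, hform hr₁] at h₁₂
  rw [← ZMod.intCast_eq_zero_iff_even, hform hr₁] at h₁₃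
  rw [← ZMod.intCast_eq_zero_iff_even, hform hr₂] at h₂₃
  have e₁₃ := ZMod.eq_of_ne_zero_of_cross_eq_zero _ _ (hu hr₁) (hu hr₃) h₁₃
  have e₂₃ := ZMod.eq_of_ne_zero_of_cross_eq_zero _ _ (hu hr₂) (hu hr₃) h₂₃
  rw [← e₂₃] at e₁₃
  rw [e₁₃] at h₁₂
  exact ZMod.cross_self_ne_one _ h₁₂

end ModTwo

lemma sCoroot_eq_sRoot_transpose {n : ℕ} (A : Matrix (Fin n) (Fin n) ℤ) :
    sCoroot A = sRoot Aᵀ := by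
  funext k y i
  simp only [sCoroot, sRoot, transpose_apply, mul_comm]

lemma pairing_transpose {n : ℕ} (A : Matrix (Fin n) (Fin n) ℤ) (y x : Fin n → ℤ) :
    pairing A y x = pairing Aᵀ x y := by
  rw [pairing, pairing, Finset.sum_comm]
  simp only [transpose_apply, mul_comm, mul_left_comm]

lemma pairing_actCoroot_actRoot_transpose {n : ℕ} (A : Matrix (Fin n) (Fin n) ℤ)
    (w w' : List (Fin n)) (y x : Fin n → ℤ) :
    pairing A (actCoroot A w y) (actRoot A w' x) =
      pairing Aᵀ (actCoroot Aᵀ w' x) (actRoot Aᵀ w y) := by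
  rw [pairing_transpose, actCoroot, actCoroot, actRoot, actRoot, sCoroot_eq_sRoot_transpose,
    sCoroot_eq_sRoot_transpose, transpose_transpose]

theorem no_A2xA1_in_short_A2_general {n : ℕ} (A : Matrix (Fin n) (Fin n) ℤ) (hA : IsGCM A)
    (d : Fin n → ℚ) (hd : IsSymmetrizer A d)
    (hlaced : ∀ i j, i ≠ j → A i j * A j i = 0 ∨ A i j * A j i = 1 ∨ A i j * A j i = 2)
    (p q : Fin n) (hpq : p ≠ q) (hApq : A p q = -1) (hAqp : A q p = -1) :
    ((∀ i, (∀ k, d i ≤ d k) ↔ (i = p ∨ i = q)) →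
      ¬ ∃ (w : Fin 3 → List (Fin n)) (r : Fin 3 → Fin n),
        (∀ i, r i = p ∨ r i = q) ∧
        Odd (pairing A (actCoroot A (w 0) (Pi.single (r 0) 1))
          (actRoot A (w 1) (Pi.single (r 1) 1))) ∧
        Odd (pairing A (actCoroot A (w 1) (Pi.single (r 1) 1))
          (actRoot A (w 0) (Pi.single (r 0) 1))) ∧
        Even (pairing A (actCoroot A (w 0) (Pi.single (r 0) 1))
          (actRoot A (w 2) (Pi.single (r 2) 1))) ∧
        Even (pairing A (actCoroot A (w 2) (Pi.single (r 2) 1))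
          (actRoot A (w 0) (Pi.single (r 0) 1))) ∧
        Even (pairing A (actCoroot A (w 1) (Pi.single (r 1) 1))
          (actRoot A (w 2) (Pi.single (r 2) 1))) ∧
        Even (pairing A (actCoroot A (w 2) (Pi.single (r 2) 1))
          (actRoot A (w 1) (Pi.single (r 1) 1))))
    ∧
    ((∀ i, (∀ k, d k ≤ d i) ↔ (i = p ∨ i = q)) →
      ¬ ∃ (w : Fin 3 → List (Fin n)) (r : Fin 3 → Fin n),
        (∀ i, r i = p ∨ r i = q) ∧
        Odd (pairing A (actCoroot A (w 0) (Pi.single (r 0) 1))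
          (actRoot A (w 1) (Pi.single (r 1) 1))) ∧
        Odd (pairing A (actCoroot A (w 1) (Pi.single (r 1) 1))
          (actRoot A (w 0) (Pi.single (r 0) 1))) ∧
        Even (pairing A (actCoroot A (w 0) (Pi.single (r 0) 1))
          (actRoot A (w 2) (Pi.single (r 2) 1))) ∧
        Even (pairing A (actCoroot A (w 2) (Pi.single (r 2) 1))
          (actRoot A (w 0) (Pi.single (r 0) 1))) ∧
        Even (pairing A (actCoroot A (w 1) (Pi.single (r 1) 1))
          (actRoot A (w 2) (Pi.single (r 2) 1))) ∧
        Even (pairing A (actCoroot A (w 2) (Pi.single (r 2) 1))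
          (actRoot A (w 1) (Pi.single (r 1) 1)))) := by
  constructor
  · rintro hmin ⟨w, r, hr, h01, -, h02, -, h12, -⟩
    exact false_of_A2xA1_parity hpq (hA.1 p) (hA.1 q) hApq hAqp
      (fun i hi j hj => even_of_symmetrizer_lt hA hd hlaced (lt_of_forall_le_iff hmin hi hj))
      (hr 0) (hr 1) (hr 2) h01 h02 h12
  · rintro hmax ⟨w, r, hr, -, h10, -, h20, -, h21⟩
    rw [pairing_actCoroot_actRoot_transpose] at h10 h20 h21
    exact false_of_A2xA1_parity (A := Aᵀ) hpq (hA.1 p) (hA.1 q) hAqp hApq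
      (fun i hi j hj => even_of_symmetrizer_lt hA hd hlaced
        (lt_of_forall_le_iff (f := OrderDual.toDual ∘ d) hmax hi hj))
      (hr 0) (hr 1) (hr 2) h10 h20 h21

/-- Let `A` be a doubly-laced symmetrizable GCM. If `X_sh = {p, q}` is of
type `A₂` (`p ≠ q`, `a_pq = a_qp = −1`), then there are no three real roots
`β₁, β₂, β₃ ∈ W·{α_p, α_q}` whose pairing matrix is congruent mod 2 to the Cartan matrix
of type `A₂ × A₁`, i.e. with `⟨β₁∨,β₂⟩, ⟨β₂∨,β₁⟩` odd and the four pairings against `β₃`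
even. In particular there is no π-system of type `A₂ × A₁` wholly in the shortest real
roots. The same holds for `X_long` of type `A₂` and the longest real roots. -/
theorem no_A2xA1_in_short_A2 {n : ℕ} (A : Matrix (Fin n) (Fin n) ℤ) (hA : IsGCM A)
    (d : Fin n → ℚ) (hd : IsSymmetrizer A d)
    (hlaced : ∀ i j, i ≠ j → A i j * A j i = 0 ∨ A i j * A j i = 1 ∨ A i j * A j i = 2)
    (hattained : ∃ i j, i ≠ j ∧ A i j * A j i = 2)
    (p q : Fin n) (hpq : p ≠ q) (hApq : A p q = -1) (hAqp : A q p = -1) :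
    ((∀ i, (∀ k, d i ≤ d k) ↔ (i = p ∨ i = q)) →
      ¬ ∃ (w : Fin 3 → List (Fin n)) (r : Fin 3 → Fin n),
        (∀ i, r i = p ∨ r i = q) ∧
        Odd (pairing A (actCoroot A (w 0) (Pi.single (r 0) 1))
          (actRoot A (w 1) (Pi.single (r 1) 1))) ∧
        Odd (pairing A (actCoroot A (w 1) (Pi.single (r 1) 1))
          (actRoot A (w 0) (Pi.single (r 0) 1))) ∧
        Even (pairing A (actCoroot A (w 0) (Pi.single (r 0) 1))
          (actRoot A (w 2) (Pi.single (r 2) 1))) ∧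
        Even (pairing A (actCoroot A (w 2) (Pi.single (r 2) 1))
          (actRoot A (w 0) (Pi.single (r 0) 1))) ∧
        Even (pairing A (actCoroot A (w 1) (Pi.single (r 1) 1))
          (actRoot A (w 2) (Pi.single (r 2) 1))) ∧
        Even (pairing A (actCoroot A (w 2) (Pi.single (r 2) 1))
          (actRoot A (w 1) (Pi.single (r 1) 1))))
    ∧
    ((∀ i, (∀ k, d k ≤ d i) ↔ (i = p ∨ i = q)) →
      ¬ ∃ (w : Fin 3 → List (Fin n)) (r : Fin 3 → Fin n),
        (∀ i, r i = p ∨ r i = q) ∧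
        Odd (pairing A (actCoroot A (w 0) (Pi.single (r 0) 1))
          (actRoot A (w 1) (Pi.single (r 1) 1))) ∧
        Odd (pairing A (actCoroot A (w 1) (Pi.single (r 1) 1))
          (actRoot A (w 0) (Pi.single (r 0) 1))) ∧
        Even (pairing A (actCoroot A (w 0) (Pi.single (r 0) 1))
          (actRoot A (w 2) (Pi.single (r 2) 1))) ∧
        Even (pairing A (actCoroot A (w 2) (Pi.single (r 2) 1))
          (actRoot A (w 0) (Pi.single (r 0) 1))) ∧
        Even (pairing A (actCoroot A (w 1) (Pi.single (r 1) 1))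
          (actRoot A (w 2) (Pi.single (r 2) 1))) ∧
        Even (pairing A (actCoroot A (w 2) (Pi.single (r 2) 1))
          (actRoot A (w 1) (Pi.single (r 1) 1)))) :=
  no_A2xA1_in_short_A2_general A hA d hd hlaced p q hpq hApq hAqp
end

section
/- There do not exist β_1,β_2,β_3,β_4 ∈ Δ(B_4) with β_i−β_j ∉ Δ(B_4) for all i≠j such that the matrix (2(β_i,β_j)/(β_i,β_i))_{i,j=1}^4 equals the 4×4 block-diagonal matrix with two diagonal blocks [[2,−1],[−2,2]]. That is, there is no π-system of type B_2⊕B_2 in the root system of type B_4 (B_2⊕B_2 ⋠ B_4). -/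
/-!
In a `B₂` pair of roots `(α, β)` with Cartan integers `-1, -2` one has `(α, α) = 2 (β, β)`, so
inside `B₄` the short root `β` is a unit vector. The short roots of the two `B₂` blocks are thus
orthogonal unit vectors, and their difference has squared norm `2`: it is a root, which a
π-system forbids.
-/

/-- The dot product on `ℤ⁴` (coordinates w.r.t. the orthonormal basis `ε₁,…,ε₄`). -/
def dot4 (x y : Fin 4 → ℤ) : ℤ := ∑ i, x i * y i

/-- The root system of type `B₄`: integer vectors of squared norm 1 or 2. -/
def B4roots : Set (Fin 4 → ℤ) := {v | dot4 v v = 1 ∨ dot4 v v = 2}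

/-- The Cartan matrix of type `B₂ ⊕ B₂`, each block with simple roots ordered
(long, short). -/
def B2B2 : Matrix (Fin 4) (Fin 4) ℤ :=
  !![2, -1, 0, 0; -2, 2, 0, 0; 0, 0, 2, -1; 0, 0, -2, 2]

lemma dot4_comm (x y : Fin 4 → ℤ) : dot4 x y = dot4 y x := by
  simp only [dot4, Fin.sum_univ_four]; ring

lemma dot4_sub_sub (x y : Fin 4 → ℤ) :
    dot4 (x - y) (x - y) = dot4 x x - 2 * dot4 x y + dot4 y y := by
  simp only [dot4, Fin.sum_univ_four, Pi.sub_apply]; ring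

lemma dot4_self_eq_one_of_cartan_B2 {α β : Fin 4 → ℤ} (hα : α ∈ B4roots)
    (hαβ : 2 * dot4 α β = -1 * dot4 α α) (hβα : 2 * dot4 β α = -2 * dot4 β β) :
    dot4 β β = 1 := by
  rw [dot4_comm] at hβα
  rcases hα with h | h <;> omega

lemma sub_mem_B4roots_of_orthonormal {x y : Fin 4 → ℤ} (hx : dot4 x x = 1) (hy : dot4 y y = 1)
    (hxy : dot4 x y = 0) : x - y ∈ B4roots :=
  Or.inr (by rw [dot4_sub_sub, hx, hy, hxy]; norm_num)

/-- There is no π-system of type `B₂ ⊕ B₂` in the root system of type `B₄`: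
no roots `β₁,…,β₄ ∈ Δ(B₄)`, with no difference of two distinct members a root, satisfy
`2(βᵢ,βⱼ) = (B₂⊕B₂)ᵢⱼ (βᵢ,βᵢ)` for all `i, j`. Hence `B₂ ⊕ B₂ ⋠ B₄`. -/
theorem no_B2B2_pisystem_in_B4 :
    ¬ ∃ β : Fin 4 → (Fin 4 → ℤ),
      (∀ i, β i ∈ B4roots) ∧
      (∀ i j, i ≠ j → β i - β j ∉ B4roots) ∧
      (∀ i j, 2 * dot4 (β i) (β j) = B2B2 i j * dot4 (β i) (β i)) := by
  rintro ⟨β, hroot, hdiff, hcart⟩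
  have hβ₁ : dot4 (β 1) (β 1) = 1 :=
    dot4_self_eq_one_of_cartan_B2 (hroot 0) (hcart 0 1) (hcart 1 0)
  have hβ₃ : dot4 (β 3) (β 3) = 1 :=
    dot4_self_eq_one_of_cartan_B2 (hroot 2) (hcart 2 3) (hcart 3 2)
  have hβ₁₃ : dot4 (β 1) (β 3) = 0 := by simpa [B2B2] using hcart 1 3
  exact hdiff 1 3 (by decide) (sub_mem_B4roots_of_orthonormal hβ₁ hβ₃ hβ₁₃)
end
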